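/- arXiv:2301.04127 — 2 statements merged into one kernel-verified Lean document; each statement's English description precedes it below -/
import Mathlib

section
/- Let (S,h) be an admissible 4-polarized lattice and Γ ⊆ root₁(S,h) a set with no separating roots. Let c₁,c₂,c₃ ∈ Γ be a triangle and κ := c₁ + c₂ + c₃. Then there is at most one l ∈ Γ ∖ {c₁,c₂,c₃} with ⟨l,κ⟩ ≥ 2 (at most one multiple section of the triangular pencil); moreover, if such an l exists, then ⟨l,m⟩ = 0 for every m ∈ sec₁ ∪ sec₂ ∪ sec₃ (the multiple section is disjoint from every simple section). -/
/-!
Common definitions: 4-polarized lattices, lines, roots, Fano graphs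
(following Degtyarev–Rams, "Counting lines with Vinberg's algorithm").
-/

namespace K3

variable {S : Type*} [AddCommGroup S] [Module ℤ S]

/-- `root₁(S,h)`: the *lines* of a 4-polarized lattice. -/
def root1 (B : S →ₗ[ℤ] S →ₗ[ℤ] ℤ) (h : S) : Set S :=
  {l : S | B l l = -2 ∧ B l h = 1}

/-- `root₀(S,h)`: the *roots* of a 4-polarized lattice. -/
def root0 (B : S →ₗ[ℤ] S →ₗ[ℤ] ℤ) (h : S) : Set S :=
  {r : S | B r r = -2 ∧ B r h = 0}

/-- `(S,B,h)` is a 4-polarized lattice: `S` is a finitely generated free ℤ-module, `B`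
a symmetric bilinear form, `⟨h,h⟩ = 4`, and `⟨v,v⟩ < 0` for nonzero `v ⊥ h`. -/
structure IsPolarized (B : S →ₗ[ℤ] S →ₗ[ℤ] ℤ) (h : S) : Prop where
  free : Module.Free ℤ S
  finite : Module.Finite ℤ S
  symm : ∀ u v : S, B u v = B v u
  deg : B h h = 4
  hyperbolic : ∀ v : S, v ≠ 0 → B v h = 0 → B v v < 0

/-- Admissibility: there is no `u` with `⟨u,u⟩ = 0` and `⟨u,h⟩ = 2`. -/
def IsAdmissible (B : S →ₗ[ℤ] S →ₗ[ℤ] ℤ) (h : S) : Prop :=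
  ¬ ∃ u : S, B u u = 0 ∧ B u h = 2

/-- The E₈ Cartan matrix (Bourbaki numbering of the Dynkin diagram). -/
def e8Cartan : Matrix (Fin 8) (Fin 8) ℤ :=
  !![2,0,-1,0,0,0,0,0;
     0,2,0,-1,0,0,0,0;
     -1,0,2,-1,0,0,0,0;
     0,-1,-1,2,-1,0,0,0;
     0,0,0,-1,2,-1,0,0;
     0,0,0,0,-1,2,-1,0;
     0,0,0,0,0,-1,2,-1;
     0,0,0,0,0,0,-1,2]

/-- The Gram matrix of `L := E₈ ⊕ E₈ ⊕ U ⊕ U ⊕ U`, where `E₈` is *negative* definite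
(Gram matrix the negative of the E₈ Cartan matrix) and `U` has Gram matrix `[[0,1],[1,0]]`. -/
def LGram : Matrix (Fin 22) (Fin 22) ℤ := fun i j =>
  if hi : (i : ℕ) < 8 then
    (if hj : (j : ℕ) < 8 then -e8Cartan ⟨i, hi⟩ ⟨j, hj⟩ else 0)
  else if hi' : (i : ℕ) < 16 then
    (if hj' : 8 ≤ (j : ℕ) ∧ (j : ℕ) < 16 then
      -e8Cartan ⟨(i : ℕ) - 8, by omega⟩ ⟨(j : ℕ) - 8, by omega⟩ else 0)
  else
    (if 16 ≤ (j : ℕ) ∧ (i : ℕ) / 2 = (j : ℕ) / 2 ∧ i ≠ j then 1 else 0)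

/-- A geometric 4-polarized lattice: admissible, even, and admitting a primitive isometric
embedding into `L = 2E₈ ⊕ 3U` (primitive = the quotient by the image is torsion-free). -/
structure IsGeometric (B : S →ₗ[ℤ] S →ₗ[ℤ] ℤ) (h : S) extends IsPolarized B h : Prop where
  admissible : IsAdmissible B h
  even : ∀ v : S, Even (B v v)
  embeds : ∃ f : S →ₗ[ℤ] (Fin 22 → ℤ), Function.Injective f ∧
    (∀ u v : S, B u v = ∑ i, ∑ j, f u i * LGram i j * f v j) ∧
    (∀ (x : Fin 22 → ℤ) (n : ℤ), n ≠ 0 → n • x ∈ LinearMap.range f →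
      x ∈ LinearMap.range f)

/-- A ℤ-linear functional is *Weyl-generic* if it does not vanish on any root. -/
def WeylGeneric (B : S →ₗ[ℤ] S →ₗ[ℤ] ℤ) (h : S) (φ : S →ₗ[ℤ] ℤ) : Prop :=
  ∀ r ∈ root0 B h, φ r ≠ 0

/-- The vertex set of the Fano graph `Fn_φ(S,h)`. -/
def fanoVerts (B : S →ₗ[ℤ] S →ₗ[ℤ] ℤ) (h : S) (φ : S →ₗ[ℤ] ℤ) : Set S :=
  {l ∈ root1 B h | ∀ r ∈ root0 B h, 0 < φ r → 0 ≤ B l r}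

/-- The set `Γ` together with `h` spans `S ⊗ ℚ`; since `S` is free, this is equivalent to:
every `s : S` has a nonzero integer multiple in the ℤ-span of `Γ ∪ {h}`. -/
def QSpannedByLines (Γ : Set S) (h : S) : Prop :=
  ∀ s : S, ∃ n : ℤ, n ≠ 0 ∧ n • s ∈ Submodule.span ℤ (Γ ∪ {h})

/-- The Fano graph as a simple graph on `Γ`: distinct `u, v` adjacent iff `⟨u,v⟩ = 1`. -/
def fanoGraph (B : S →ₗ[ℤ] S →ₗ[ℤ] ℤ) (Γ : Set S) : SimpleGraph Γ where
  Adj u v := u ≠ v ∧ B u.1 v.1 = 1 ∧ B v.1 u.1 = 1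
  symm := by refine ⟨?_⟩; intro u v hadj; exact ⟨hadj.1.symm, hadj.2.2, hadj.2.1⟩
  loopless := by refine ⟨?_⟩; intro u hadj; exact hadj.1 rfl

/-- `Γ` has no separating roots: no root is positive on one element of `Γ` and negative
on another. -/
def NoSeparatingRoots (B : S →ₗ[ℤ] S →ₗ[ℤ] ℤ) (h : S) (Γ : Set S) : Prop :=
  ¬ ∃ r ∈ root0 B h, ∃ u ∈ Γ, ∃ v ∈ Γ, 0 < B r u ∧ B r v < 0

/-- A triangle in a set `Γ` of lines: three distinct elements pairwise of product `1`. -/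
def IsTriangle (B : S →ₗ[ℤ] S →ₗ[ℤ] ℤ) (Γ : Set S) (c₁ c₂ c₃ : S) : Prop :=
  c₁ ∈ Γ ∧ c₂ ∈ Γ ∧ c₃ ∈ Γ ∧ c₁ ≠ c₂ ∧ c₁ ≠ c₃ ∧ c₂ ≠ c₃ ∧
    B c₁ c₂ = 1 ∧ B c₁ c₃ = 1 ∧ B c₂ c₃ = 1

/-- Simple sections through `a` of the triangle `(a,b,c)`:
`sec a := {l ∈ Γ : ⟨l,a⟩ = 1, ⟨l,b⟩ = ⟨l,c⟩ = 0}`. -/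
def sec (B : S →ₗ[ℤ] S →ₗ[ℤ] ℤ) (Γ : Set S) (a b c : S) : Set S :=
  {l ∈ Γ | B l a = 1 ∧ B l b = 0 ∧ B l c = 0}

/-- The pencil of a triangle `(c₁,c₂,c₃)` in `Γ`. -/
def pencil (B : S →ₗ[ℤ] S →ₗ[ℤ] ℤ) (Γ : Set S) (c₁ c₂ c₃ : S) : Set S :=
  {c₁, c₂, c₃} ∪ {l ∈ Γ | B l c₁ = 0 ∧ B l c₂ = 0 ∧ B l c₃ = 0}

end K3

/-!
For an isotropic class `κ` with `⟨κ,h⟩ = 3` (such as the sum of a triangle) and a line `l`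
with `⟨l,κ⟩ = k`, the vector `v := h - κ - l` is orthogonal to `h` and has `⟨v,v⟩ = 2k - 6`.
If `k = 2`, `v` is a root with `⟨v,l⟩ = 1`, so by the absence of separating roots it is
nonnegative on all of `Γ`; if `k ≥ 3`, hyperbolicity forces `v = 0`. Either way
`⟨m,l⟩ + ⟨m,κ⟩ ≤ 1` for every `m ∈ Γ`. Since distinct lines of `Γ` have nonnegative product,
a second multiple section `l'` (with `⟨l',κ⟩ ≥ 2`) or a simple section `m` (with `⟨m,κ⟩ = 1`)
meeting `l` is impossible.
-/

namespace K3

section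

variable {S : Type*} [AddCommGroup S] [Module ℤ S] {B : S →ₗ[ℤ] S →ₗ[ℤ] ℤ} {h : S}

theorem IsPolarized.eq_zero_of_apply_eq_zero_of_nonneg (hpol : IsPolarized B h) {v : S}
    (hvh : B v h = 0) (hvv : 0 ≤ B v v) : v = 0 := by
  by_contra hv
  exact (hpol.hyperbolic v hv hvh).not_ge hvv

theorem NoSeparatingRoots.nonneg_of_pos {Γ : Set S} (hsep : NoSeparatingRoots B h Γ)
    {r u v : S} (hr : r ∈ root0 B h) (hu : u ∈ Γ) (hv : v ∈ Γ) (hru : 0 < B r u) :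
    0 ≤ B r v := by
  by_contra! hrv
  exact hsep ⟨r, hr, u, hu, v, hv, hru, hrv⟩

/-- If `⟨u,v⟩ = -1` then `u - v` is a root separating `v` from `u`; if `⟨u,v⟩ ≤ -2` then
`u - v ⊥ h` has nonnegative square. -/
theorem apply_nonneg_of_ne (hpol : IsPolarized B h) {Γ : Set S} (hΓ : Γ ⊆ root1 B h)
    (hsep : NoSeparatingRoots B h Γ) {u v : S} (hu : u ∈ Γ) (hv : v ∈ Γ) (huv : u ≠ v) :
    0 ≤ B u v := by
  obtain ⟨huu, huh⟩ := hΓ hu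
  obtain ⟨hvv, hvh⟩ := hΓ hv
  have hvu := hpol.symm v u
  have hperp : B (u - v) h = 0 := by simp only [map_sub, LinearMap.sub_apply]; omega
  have hsq : B (u - v) (u - v) = -4 - 2 * B u v := by
    simp only [map_sub, LinearMap.sub_apply]; omega
  by_contra! hneg
  rcases (show B u v = -1 ∨ B u v ≤ -2 by omega) with hm1 | hle
  · have hpos : 0 < B (u - v) v := by simp only [map_sub, LinearMap.sub_apply]; omega
    have := hsep.nonneg_of_pos ⟨by omega, hperp⟩ hv hu hpos
    simp only [map_sub, LinearMap.sub_apply] at this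
    omega
  · exact huv (sub_eq_zero.mp (hpol.eq_zero_of_apply_eq_zero_of_nonneg hperp (by omega)))

theorem IsTriangle.apply_sum_self (hpol : IsPolarized B h) {Γ : Set S} (hΓ : Γ ⊆ root1 B h)
    {c₁ c₂ c₃ : S} (htri : IsTriangle B Γ c₁ c₂ c₃) :
    B (c₁ + c₂ + c₃) (c₁ + c₂ + c₃) = 0 := by
  obtain ⟨h₁, h₂, h₃, -, -, -, e₁₂, e₁₃, e₂₃⟩ := htri
  have := hpol.symm c₁ c₂; have := hpol.symm c₁ c₃; have := hpol.symm c₂ c₃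
  simp only [map_add, LinearMap.add_apply]
  linarith [(hΓ h₁).1, (hΓ h₂).1, (hΓ h₃).1]

theorem IsTriangle.apply_sum_polarization {Γ : Set S} (hΓ : Γ ⊆ root1 B h)
    {c₁ c₂ c₃ : S} (htri : IsTriangle B Γ c₁ c₂ c₃) : B (c₁ + c₂ + c₃) h = 3 := by
  simp only [map_add, LinearMap.add_apply, (hΓ htri.1).2, (hΓ htri.2.1).2, (hΓ htri.2.2.1).2]
  norm_num

theorem apply_add_apply_le_one_of_two_le_apply (hpol : IsPolarized B h) {Γ : Set S}
    (hΓ : Γ ⊆ root1 B h) (hsep : NoSeparatingRoots B h Γ) {κ : S} (hκκ : B κ κ = 0)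
    (hκh : B κ h = 3) {l m : S} (hl : l ∈ Γ) (hlκ : 2 ≤ B l κ) (hm : m ∈ Γ) :
    B m l + B m κ ≤ 1 := by
  obtain ⟨hll, hlh⟩ := hΓ hl
  have hmh := (hΓ hm).2
  have := hpol.deg
  have := hpol.symm κ l; have := hpol.symm h l; have := hpol.symm h κ
  have := hpol.symm h m; have := hpol.symm κ m; have := hpol.symm l m
  have hperp : B (h - κ - l) h = 0 := by simp only [map_sub, LinearMap.sub_apply]; omega
  have hsq : B (h - κ - l) (h - κ - l) = 2 * B l κ - 6 := by
    simp only [map_sub, LinearMap.sub_apply]; omega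
  suffices 0 ≤ B (h - κ - l) m by simp only [map_sub, LinearMap.sub_apply] at this; omega
  rcases (show B l κ = 2 ∨ 3 ≤ B l κ by omega) with hk | hk
  · have hpos : 0 < B (h - κ - l) l := by simp only [map_sub, LinearMap.sub_apply]; omega
    exact hsep.nonneg_of_pos ⟨by omega, hperp⟩ hl hm hpos
  · simp [hpol.eq_zero_of_apply_eq_zero_of_nonneg hperp (by omega)]

end

theorem at_most_one_multiple_section_general
    {S : Type*} [AddCommGroup S] [Module ℤ S]
    (B : S →ₗ[ℤ] S →ₗ[ℤ] ℤ) (h : S)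
    (hpol : IsPolarized B h)
    (Γ : Set S) (hΓ : Γ ⊆ root1 B h)
    (hsep : NoSeparatingRoots B h Γ)
    (c₁ c₂ c₃ : S) (htri : IsTriangle B Γ c₁ c₂ c₃) :
    (∀ l ∈ Γ, ∀ l' ∈ Γ, l ∉ ({c₁, c₂, c₃} : Set S) → l' ∉ ({c₁, c₂, c₃} : Set S) →
      2 ≤ B l (c₁ + c₂ + c₃) → 2 ≤ B l' (c₁ + c₂ + c₃) → l = l') ∧
    (∀ l ∈ Γ, l ∉ ({c₁, c₂, c₃} : Set S) → 2 ≤ B l (c₁ + c₂ + c₃) →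
      ∀ m ∈ sec B Γ c₁ c₂ c₃ ∪ sec B Γ c₂ c₁ c₃ ∪ sec B Γ c₃ c₁ c₂, B l m = 0) := by
  have key {l m : S} (hl : l ∈ Γ) (hlκ : 2 ≤ B l (c₁ + c₂ + c₃)) (hm : m ∈ Γ) :
      B m l + B m (c₁ + c₂ + c₃) ≤ 1 :=
    apply_add_apply_le_one_of_two_le_apply hpol hΓ hsep (htri.apply_sum_self hpol hΓ)
      (htri.apply_sum_polarization hΓ) hl hlκ hm
  refine ⟨fun l hl l' hl' _ _ hlκ hl'κ => ?_, fun l hl _ hlκ m hm => ?_⟩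
  · by_contra hne
    linarith [key hl hlκ hl', apply_nonneg_of_ne hpol hΓ hsep hl' hl (Ne.symm hne)]
  · have hmΓ : m ∈ Γ := by rcases hm with (hm | hm) | hm <;> exact hm.1
    have hmκ : B m (c₁ + c₂ + c₃) = 1 := by
      rcases hm with (⟨-, h₁, h₂, h₃⟩ | ⟨-, h₁, h₂, h₃⟩) | ⟨-, h₁, h₂, h₃⟩ <;>
        simp only [map_add, h₁, h₂, h₃] <;> norm_num
    have hne : m ≠ l := by rintro rfl; omega
    rw [hpol.symm]
    linarith [key hl hlκ hmΓ, apply_nonneg_of_ne hpol hΓ hsep hmΓ hl hne]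

/-- Lemma 3.1. In an admissible 4-polarized lattice, a set of lines `Γ`
with no separating roots and a triangle `c₁,c₂,c₃ ∈ Γ`: at most one multiple section, i.e.
at most one `l ∈ Γ ∖ {c₁,c₂,c₃}` with `⟨l, κ⟩ ≥ 2` where `κ = c₁+c₂+c₃`; moreover such an
`l` is orthogonal to every simple section in `sec₁ ∪ sec₂ ∪ sec₃`. -/
theorem at_most_one_multiple_section
    {S : Type*} [AddCommGroup S] [Module ℤ S]
    (B : S →ₗ[ℤ] S →ₗ[ℤ] ℤ) (h : S)
    (hpol : IsPolarized B h) (hadm : IsAdmissible B h)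
    (Γ : Set S) (hΓ : Γ ⊆ root1 B h)
    (hsep : NoSeparatingRoots B h Γ)
    (c₁ c₂ c₃ : S) (htri : IsTriangle B Γ c₁ c₂ c₃) :
    (∀ l ∈ Γ, ∀ l' ∈ Γ, l ∉ ({c₁, c₂, c₃} : Set S) → l' ∉ ({c₁, c₂, c₃} : Set S) →
      2 ≤ B l (c₁ + c₂ + c₃) → 2 ≤ B l' (c₁ + c₂ + c₃) → l = l') ∧
    (∀ l ∈ Γ, l ∉ ({c₁, c₂, c₃} : Set S) → 2 ≤ B l (c₁ + c₂ + c₃) →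
      ∀ m ∈ sec B Γ c₁ c₂ c₃ ∪ sec B Γ c₂ c₁ c₃ ∪ sec B Γ c₃ c₁ c₂, B l m = 0) :=
  at_most_one_multiple_section_general B h hpol Γ hΓ hsep c₁ c₂ c₃ htri

end K3
end

section
/- For every integer d ≥ 3, the degree-d Fermat surface {x₀^d + x₁^d + x₂^d + x₃^d = 0} in ℙ³(ℂ) contains exactly 3d² lines; equivalently, the number of two-dimensional ℂ-linear subspaces W of ℂ⁴ such that the polynomial x₀^d + x₁^d + x₂^d + x₃^d vanishes at every point of W is exactly 3d². -/
open Polynomial Module Submodule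

/-- The subspace `{x | x j = a * x i ∧ x l = e * x k}`. -/
noncomputable def fermatLine (i j k l : Fin 4) (a e : ℂ) : Submodule ℂ (Fin 4 → ℂ) where
  carrier := {x | x j = a * x i ∧ x l = e * x k}
  add_mem' := by
    rintro x y ⟨h1, h2⟩ ⟨h3, h4⟩
    refine ⟨?_, ?_⟩ <;> simp only [Pi.add_apply, h1, h2, h3, h4] <;> ring
  zero_mem' := by simp
  smul_mem' := by
    rintro c x ⟨h1, h2⟩
    refine ⟨?_, ?_⟩ <;> simp only [Pi.smul_apply, smul_eq_mul, h1, h2] <;> ring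

lemma mem_fermatLine {i j k l : Fin 4} {a e : ℂ} {x : Fin 4 → ℂ} :
    x ∈ fermatLine i j k l a e ↔ x j = a * x i ∧ x l = e * x k := Iff.rfl

def GoodIdx (i j k l : Fin 4) : Prop :=
  i ≠ j ∧ i ≠ k ∧ i ≠ l ∧ j ≠ k ∧ j ≠ l ∧ k ≠ l ∧ ∀ t : Fin 4, t = i ∨ t = j ∨ t = k ∨ t = l

instance (i j k l : Fin 4) : Decidable (GoodIdx i j k l) := by unfold GoodIdx; infer_instance

lemma GoodIdx.swap {i j k l : Fin 4} (h : GoodIdx i j k l) : GoodIdx k l i j := by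
  obtain ⟨h1,h2,h3,h4,h5,h6,h7⟩ := h
  exact ⟨h6, h2.symm, h4.symm, h3.symm, h5.symm, h1, fun t => by rcases h7 t with a|a|a|a <;> tauto⟩

lemma GoodIdx.flip1 {i j k l : Fin 4} (h : GoodIdx i j k l) : GoodIdx j i k l := by
  obtain ⟨h1,h2,h3,h4,h5,h6,h7⟩ := h
  exact ⟨h1.symm, h4, h5, h2, h3, h6, fun t => by rcases h7 t with a|a|a|a <;> tauto⟩

lemma GoodIdx.flip2 {i j k l : Fin 4} (h : GoodIdx i j k l) : GoodIdx i j l k := by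
  obtain ⟨h1,h2,h3,h4,h5,h6,h7⟩ := h
  exact ⟨h1, h3, h2, h5, h4, h6.symm, fun t => by rcases h7 t with a|a|a|a <;> tauto⟩

lemma GoodIdx.perm2 {i j k l : Fin 4} (h : GoodIdx i j k l) : GoodIdx i l k j := by
  obtain ⟨h1,h2,h3,h4,h5,h6,h7⟩ := h
  exact ⟨h3, h2, h1, h6.symm, h5.symm, h4.symm, fun t => by rcases h7 t with a|a|a|a <;> tauto⟩

lemma GoodIdx.sum_four {i j k l : Fin 4} (h : GoodIdx i j k l) (F : Fin 4 → ℂ) :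
    ∑ t : Fin 4, F t = F i + F j + F k + F l := by
  obtain ⟨h1,h2,h3,h4,h5,h6,h7⟩ := h
  have huniv : (Finset.univ : Finset (Fin 4)) = {i, j, k, l} := by
    apply Finset.ext
    intro t
    simp only [Finset.mem_univ, Finset.mem_insert, Finset.mem_singleton, true_iff]
    exact h7 t
  rw [huniv, Finset.sum_insert (by simp [h1, h2, h3]),
    Finset.sum_insert (by simp [h4, h5]), Finset.sum_insert (by simp [h6]),
    Finset.sum_singleton]
  ring

lemma fermatLine_swap (i j k l : Fin 4) (a e : ℂ) :
    fermatLine i j k l a e = fermatLine k l i j e a := by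
  ext x; exact and_comm

lemma fermatLine_flip1 (i j k l : Fin 4) {a : ℂ} (e : ℂ) (ha : a ≠ 0) :
    fermatLine i j k l a e = fermatLine j i k l a⁻¹ e := by
  ext x
  simp only [mem_fermatLine]
  constructor
  · rintro ⟨h1, h2⟩; exact ⟨by rw [h1]; field_simp, h2⟩
  · rintro ⟨h1, h2⟩; exact ⟨by rw [h1]; field_simp, h2⟩

lemma fermatLine_flip2 (i j k l : Fin 4) (a : ℂ) {e : ℂ} (he : e ≠ 0) :
    fermatLine i j k l a e = fermatLine i j l k a e⁻¹ := by
  rw [fermatLine_swap, fermatLine_flip1 _ _ _ _ _ he, fermatLine_swap]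

lemma finrank_span_pair_norm {i k : Fin 4} {u v : Fin 4 → ℂ}
    (hui : u i = 1) (huk : u k = 0) (hvi : v i = 0) (hvk : v k = 1) :
    finrank ℂ (span ℂ ({u, v} : Set (Fin 4 → ℂ))) = 2 := by
  have hli : LinearIndependent ℂ ![u, v] := by
    rw [LinearIndependent.pair_iff]
    intro s t hst
    have h1 := congrFun hst i
    have h2 := congrFun hst k
    simp only [Pi.add_apply, Pi.smul_apply, smul_eq_mul, hui, huk, hvi, hvk, Pi.zero_apply,
      mul_one, mul_zero, add_zero, zero_add] at h1 h2
    exact ⟨h1, h2⟩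
  have hr : Set.range ![u, v] = {u, v} := by
    ext w
    simp [Matrix.range_cons, Matrix.range_empty, or_comm]
  rw [← hr, finrank_span_eq_card hli, Fintype.card_fin]

lemma fermatLine_finrank {i j k l : Fin 4} (h : GoodIdx i j k l) (a e : ℂ) :
    finrank ℂ (fermatLine i j k l a e) = 2 := by
  obtain ⟨h1, h2, h3, h4, h5, h6, h7⟩ := h
  set u : Fin 4 → ℂ := (Pi.single i 1 : Fin 4 → ℂ) + a • (Pi.single j 1 : Fin 4 → ℂ) with hu
  set v : Fin 4 → ℂ := (Pi.single k 1 : Fin 4 → ℂ) + e • (Pi.single l 1 : Fin 4 → ℂ) with hv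
  have hui : u i = 1 := by
    simp [hu, hv, Pi.single_eq_same, Pi.single_eq_of_ne, h1, h2, h3, h4, h5, h6, Ne.symm h1, Ne.symm h2, Ne.symm h3, Ne.symm h4, Ne.symm h5, Ne.symm h6]
  have huj : u j = a := by
    simp [hu, hv, Pi.single_eq_same, Pi.single_eq_of_ne, h1, h2, h3, h4, h5, h6, Ne.symm h1, Ne.symm h2, Ne.symm h3, Ne.symm h4, Ne.symm h5, Ne.symm h6]
  have huk : u k = 0 := by
    simp [hu, hv, Pi.single_eq_same, Pi.single_eq_of_ne, h1, h2, h3, h4, h5, h6, Ne.symm h1, Ne.symm h2, Ne.symm h3, Ne.symm h4, Ne.symm h5, Ne.symm h6]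
  have hul : u l = 0 := by
    simp [hu, hv, Pi.single_eq_same, Pi.single_eq_of_ne, h1, h2, h3, h4, h5, h6, Ne.symm h1, Ne.symm h2, Ne.symm h3, Ne.symm h4, Ne.symm h5, Ne.symm h6]
  have hvi : v i = 0 := by
    simp [hu, hv, Pi.single_eq_same, Pi.single_eq_of_ne, h1, h2, h3, h4, h5, h6, Ne.symm h1, Ne.symm h2, Ne.symm h3, Ne.symm h4, Ne.symm h5, Ne.symm h6]
  have hvj : v j = 0 := by
    simp [hu, hv, Pi.single_eq_same, Pi.single_eq_of_ne, h1, h2, h3, h4, h5, h6, Ne.symm h1, Ne.symm h2, Ne.symm h3, Ne.symm h4, Ne.symm h5, Ne.symm h6]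
  have hvk : v k = 1 := by
    simp [hu, hv, Pi.single_eq_same, Pi.single_eq_of_ne, h1, h2, h3, h4, h5, h6, Ne.symm h1, Ne.symm h2, Ne.symm h3, Ne.symm h4, Ne.symm h5, Ne.symm h6]
  have hvl : v l = e := by
    simp [hu, hv, Pi.single_eq_same, Pi.single_eq_of_ne, h1, h2, h3, h4, h5, h6, Ne.symm h1, Ne.symm h2, Ne.symm h3, Ne.symm h4, Ne.symm h5, Ne.symm h6]
  have hspan : fermatLine i j k l a e = span ℂ ({u, v} : Set (Fin 4 → ℂ)) := by
    apply le_antisymm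
    · rintro x ⟨hx1, hx2⟩
      rw [Submodule.mem_span_pair]
      refine ⟨x i, x k, ?_⟩
      funext t
      rcases h7 t with rfl | rfl | rfl | rfl <;>
        simp only [Pi.add_apply, Pi.smul_apply, smul_eq_mul, hui, huj, huk, hul, hvi, hvj,
          hvk, hvl, hx1, hx2] <;> ring
    · rw [Submodule.span_le]
      rintro x (rfl | rfl)
      · exact ⟨by rw [hui, huj, mul_one], by rw [huk, hul, mul_zero]⟩
      · exact ⟨by rw [hvi, hvj, mul_zero], by rw [hvk, hvl, mul_one]⟩
  rw [hspan]
  exact finrank_span_pair_norm hui huk hvi hvk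

lemma fermatLine_vanish {d : ℕ} (hd0 : d ≠ 0) {i j k l : Fin 4} (h : GoodIdx i j k l)
    {a e : ℂ} (ha : a ^ d = -1) (he : e ^ d = -1) :
    ∀ x ∈ fermatLine i j k l a e, ∑ t : Fin 4, x t ^ d = 0 := by
  rintro x ⟨hx1, hx2⟩
  rw [h.sum_four, hx1, hx2, mul_pow, mul_pow, ha, he]
  ring

/-- If `W` has rank 2 and contains vectors of the indicated coordinate shape,
then `W` is the corresponding `fermatLine`. -/
lemma eq_fermatLine {i j k l : Fin 4} (h : GoodIdx i j k l)
    {W : Submodule ℂ (Fin 4 → ℂ)} (hW2 : finrank ℂ W = 2)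
    {u v : Fin 4 → ℂ} (hu : u ∈ W) (hv : v ∈ W) {a e : ℂ}
    (hui : u i = 1) (huj : u j = a) (huk : u k = 0) (hul : u l = 0)
    (hvi : v i = 0) (hvj : v j = 0) (hvk : v k = 1) (hvl : v l = e) :
    W = fermatLine i j k l a e := by
  have hEW : fermatLine i j k l a e ≤ W := by
    rintro x ⟨hx1, hx2⟩
    have hx : x = x i • u + x k • v := by
      funext t
      rcases h.2.2.2.2.2.2 t with rfl | rfl | rfl | rfl <;>
        simp only [Pi.add_apply, Pi.smul_apply, smul_eq_mul, hui, huj, huk, hul, hvi, hvj,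
          hvk, hvl, hx1, hx2] <;> ring
    rw [hx]
    exact W.add_mem (W.smul_mem _ hu) (W.smul_mem _ hv)
  have huE : u ∈ fermatLine i j k l a e := ⟨by rw [huj, hui, mul_one], by rw [hul, huk, mul_zero]⟩
  have hvE : v ∈ fermatLine i j k l a e := ⟨by rw [hvj, hvi, mul_zero], by rw [hvl, hvk, mul_one]⟩
  have hsle : span ℂ ({u, v} : Set (Fin 4 → ℂ)) ≤ fermatLine i j k l a e := by
    rw [Submodule.span_le]
    rintro x (rfl | rfl)
    · exact huE
    · exact hvE
  have h2le : 2 ≤ finrank ℂ (fermatLine i j k l a e) := by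
    rw [← finrank_span_pair_norm hui huk hvi hvk]
    exact Submodule.finrank_mono hsle
  exact (Submodule.eq_of_le_of_finrank_le hEW (by rw [hW2]; exact h2le)).symm

lemma coeff_vanish (d : ℕ) (u v : Fin 4 → ℂ)
    (h : ∀ s : ℂ, ∑ t : Fin 4, (s * u t + v t) ^ d = 0) :
    ∀ n, n ≤ d → ∑ t : Fin 4, u t ^ n * v t ^ (d - n) = 0 := by
  set p : ℂ[X] := ∑ n ∈ Finset.range (d + 1),
      C ((∑ t : Fin 4, u t ^ n * v t ^ (d - n)) * (d.choose n : ℂ)) * X ^ n with hp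
  have heval : ∀ s : ℂ, p.eval s = ∑ t : Fin 4, (s * u t + v t) ^ d := by
    intro s
    rw [hp]
    simp only [eval_finset_sum, eval_mul, eval_C, eval_pow, eval_X]
    have : ∀ t : Fin 4, (s * u t + v t) ^ d
        = ∑ n ∈ Finset.range (d + 1), u t ^ n * v t ^ (d - n) * (d.choose n : ℂ) * s ^ n := by
      intro t
      rw [add_pow]
      apply Finset.sum_congr rfl
      intro n _
      ring
    rw [Finset.sum_congr rfl fun t _ => this t, Finset.sum_comm]
    apply Finset.sum_congr rfl
    intro n _
    rw [Finset.sum_mul, Finset.sum_mul]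
  have hp0 : p = 0 := by
    apply Polynomial.funext
    intro s
    rw [heval s, h s, eval_zero]
  intro n hn
  have hc := congrArg (fun q => Polynomial.coeff q n) hp0
  simp only [hp, finset_sum_coeff, coeff_zero, Polynomial.coeff_C_mul, Polynomial.coeff_X_pow,
    mul_ite, mul_one, mul_zero] at hc
  rw [Finset.sum_ite_eq (Finset.range (d + 1)) n] at hc
  simp only [Finset.mem_range, Nat.lt_succ_iff, hn, if_true] at hc
  have hch : (d.choose n : ℂ) ≠ 0 := by
    exact_mod_cast Nat.cast_ne_zero.mpr (Nat.choose_pos hn).ne'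
  exact (mul_eq_zero.mp hc).resolve_right hch

lemma key_alg0 {d : ℕ} (hd : 3 ≤ d) {a b c e : ℂ} (hb : b = 0)
    (h0 : 1 + b ^ d + e ^ d = 0) (hdd : 1 + a ^ d + c ^ d = 0)
    (hm : ∀ n, 0 < n → n < d → a ^ n * b ^ (d - n) + c ^ n * e ^ (d - n) = 0) :
    b = 0 ∧ c = 0 ∧ a ^ d = -1 ∧ e ^ d = -1 := by
  subst hb
  have hd0 : d ≠ 0 := by omega
  rw [zero_pow hd0] at h0
  have he : e ^ d = -1 := by linear_combination h0
  have he0 : e ≠ 0 := by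
    intro h; rw [h, zero_pow hd0] at he; exact absurd he (by norm_num)
  have h1 := hm 1 (by omega) (by omega)
  rw [zero_pow (by omega : d - 1 ≠ 0)] at h1
  have hc : c = 0 := by
    have := pow_ne_zero (d - 1) he0
    have h1' : c * e ^ (d - 1) = 0 := by linear_combination h1
    rcases mul_eq_zero.mp h1' with h | h
    · simpa using h
    · exact absurd h this
  refine ⟨rfl, hc, ?_, he⟩
  rw [hc, zero_pow hd0] at hdd
  linear_combination hdd

lemma key_alg {d : ℕ} (hd : 3 ≤ d) {a b c e : ℂ}
    (h0 : 1 + b ^ d + e ^ d = 0) (hdd : 1 + a ^ d + c ^ d = 0)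
    (hm : ∀ n, 0 < n → n < d → a ^ n * b ^ (d - n) + c ^ n * e ^ (d - n) = 0) :
    (b = 0 ∧ c = 0 ∧ a ^ d = -1 ∧ e ^ d = -1) ∨
    (a = 0 ∧ e = 0 ∧ c ^ d = -1 ∧ b ^ d = -1) := by
  have hd0 : d ≠ 0 := by omega
  by_cases hb : b = 0
  · exact Or.inl (key_alg0 hd hb h0 hdd hm)
  by_cases he : e = 0
  · have hm' : ∀ n, 0 < n → n < d → c ^ n * e ^ (d - n) + a ^ n * b ^ (d - n) = 0 :=
      fun n h1 h2 => by linear_combination hm n h1 h2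
    obtain ⟨-, ha, hc, hbb⟩ := key_alg0 hd he (by linear_combination h0) (by linear_combination hdd) hm'
    exact Or.inr ⟨ha, he, hc, hbb⟩
  -- b ≠ 0 and e ≠ 0 : derive a contradiction
  exfalso
  have ha : a ≠ 0 := by
    intro h
    have h1 := hm 1 (by omega) (by omega)
    rw [h, zero_pow one_ne_zero] at h1
    have h1' : c * e ^ (d - 1) = 0 := by linear_combination h1
    have hc : c = 0 := by
      rcases mul_eq_zero.mp h1' with hh | hh
      · exact hh
      · exact absurd hh (pow_ne_zero _ he)
    rw [h, hc, zero_pow hd0] at hdd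
    norm_num at hdd
  have hc : c ≠ 0 := by
    intro h
    have h1 := hm 1 (by omega) (by omega)
    rw [h, zero_pow one_ne_zero] at h1
    have h1' : a * b ^ (d - 1) = 0 := by linear_combination h1
    rcases mul_eq_zero.mp h1' with hh | hh
    · exact ha hh
    · exact pow_ne_zero _ hb hh
  obtain ⟨m, rfl⟩ : ∃ m, d = m + 3 := ⟨d - 3, by omega⟩
  have h1 := hm (m + 2) (by omega) (by omega)
  have h2 := hm (m + 1) (by omega) (by omega)
  rw [show m + 3 - (m + 2) = 1 from by omega] at h1
  rw [show m + 3 - (m + 1) = 2 from by omega] at h2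
  have key : (a ^ (m + 3) + c ^ (m + 3)) * (c ^ (m + 1) * e ^ 2) = 0 := by
    linear_combination a ^ (m + 3) * h2 - (a ^ (m + 2) * b - c ^ (m + 2) * e) * h1
  have hsum : a ^ (m + 3) + c ^ (m + 3) = 0 := by
    rcases mul_eq_zero.mp key with hh | hh
    · exact hh
    · rcases mul_eq_zero.mp hh with hh' | hh'
      · exact absurd hh' (pow_ne_zero _ hc)
      · exact absurd hh' (pow_ne_zero _ he)
  have : (1 : ℂ) = 0 := by linear_combination hdd - hsum
  norm_num at this

lemma root_ne_zero {d : ℕ} (hd0 : d ≠ 0) {a : ℂ} (ha : a ^ d = -1) : a ≠ 0 := by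
  intro h
  rw [h, zero_pow hd0] at ha
  exact absurd ha (by norm_num)

lemma inv_root {d : ℕ} {a : ℂ} (ha : a ^ d = -1) : (a⁻¹) ^ d = -1 := by
  rw [inv_pow, ha]
  norm_num

/-- Structure theorem: a rank-2 subspace on which the Fermat polynomial vanishes,
given a normalized pair of its elements, is a `fermatLine`. -/
lemma key_structure {d : ℕ} (hd : 3 ≤ d) {W : Submodule ℂ (Fin 4 → ℂ)}
    (hW2 : finrank ℂ W = 2) (hvan : ∀ x ∈ W, ∑ t : Fin 4, x t ^ d = 0)
    {i j k l : Fin 4} (h : GoodIdx i j k l) {u v : Fin 4 → ℂ}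
    (hu : u ∈ W) (hv : v ∈ W)
    (hui : u i = 1) (huk : u k = 0) (hvi : v i = 0) (hvk : v k = 1) :
    ∃ a e : ℂ, a ^ d = -1 ∧ e ^ d = -1 ∧
      (W = fermatLine i j k l a e ∨ W = fermatLine i l k j a e) := by
  have hd0 : d ≠ 0 := by omega
  have hs : ∀ s : ℂ, ∑ t : Fin 4, (s * u t + v t) ^ d = 0 := by
    intro s
    have hmem : s • u + v ∈ W := W.add_mem (W.smul_mem s hu) hv
    have := hvan _ hmem
    simpa using this
  have hc := coeff_vanish d u v hs
  set a := u j with hadef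
  set b := v j with hbdef
  set c := u l with hcdef
  set e := v l with hedef
  have h0 : 1 + b ^ d + e ^ d = 0 := by
    have h00 := hc 0 (Nat.zero_le d)
    rw [h.sum_four] at h00
    simp only [pow_zero, Nat.sub_zero, one_mul, hvi, hvk, hui, huk] at h00
    rw [zero_pow hd0, one_pow] at h00
    linear_combination h00
  have hdd : 1 + a ^ d + c ^ d = 0 := by
    have h00 := hc d le_rfl
    rw [h.sum_four] at h00
    simp only [Nat.sub_self, pow_zero, mul_one, hui, huk] at h00
    rw [zero_pow hd0, one_pow] at h00
    linear_combination h00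
  have hm : ∀ n, 0 < n → n < d → a ^ n * b ^ (d - n) + c ^ n * e ^ (d - n) = 0 := by
    intro n hn1 hn2
    have h00 := hc n (le_of_lt hn2)
    rw [h.sum_four] at h00
    rw [hui, huk, hvi, hvk, one_pow, one_pow, zero_pow (by omega : d - n ≠ 0),
      zero_pow (by omega : n ≠ 0), mul_zero, zero_mul] at h00
    linear_combination h00
  rcases key_alg hd h0 hdd hm with ⟨hb0, hc0, hA, hE⟩ | ⟨ha0, he0, hC, hB⟩
  · refine ⟨a, e, hA, hE, Or.inl ?_⟩
    exact eq_fermatLine h hW2 hu hv hui rfl huk (by rw [← hcdef, hc0]) hvi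
      (by rw [← hbdef, hb0]) hvk rfl
  · refine ⟨c, b, hC, hB, Or.inr ?_⟩
    exact eq_fermatLine h.perm2 hW2 hu hv hui rfl huk (by rw [← hadef, ha0]) hvi
      (by rw [← hedef, he0]) hvk rfl

/-- The canonical index quadruples for the three pairings. -/
def quadIdx : Fin 3 → Fin 4 × Fin 4 × Fin 4 × Fin 4 := ![(0, 1, 2, 3), (0, 2, 1, 3), (0, 3, 1, 2)]

/-- Parametrization of the lines on the Fermat surface. -/
noncomputable def gmap (d : ℕ)
    (x : Fin 3 × {z : ℂ // z ^ d = -1} × {z : ℂ // z ^ d = -1}) :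
    Submodule ℂ (Fin 4 → ℂ) :=
  fermatLine (quadIdx x.1).1 (quadIdx x.1).2.1 (quadIdx x.1).2.2.1 (quadIdx x.1).2.2.2
    x.2.1.1 x.2.2.1

lemma mem_range_gmap_canon {d : ℕ} {j k l : Fin 4} (h : GoodIdx 0 j k l) (hkl : k < l)
    {a e : ℂ} (ha : a ^ d = -1) (he : e ^ d = -1) :
    fermatLine 0 j k l a e ∈ Set.range (gmap d) := by
  have htri : ∀ j k l : Fin 4, GoodIdx 0 j k l → k < l →
      (j = 1 ∧ k = 2 ∧ l = 3) ∨ (j = 2 ∧ k = 1 ∧ l = 3) ∨ (j = 3 ∧ k = 1 ∧ l = 2) := by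
    decide
  rcases htri j k l h hkl with ⟨rfl, rfl, rfl⟩ | ⟨rfl, rfl, rfl⟩ | ⟨rfl, rfl, rfl⟩
  · exact ⟨(0, ⟨a, ha⟩, ⟨e, he⟩), rfl⟩
  · exact ⟨(1, ⟨a, ha⟩, ⟨e, he⟩), rfl⟩
  · exact ⟨(2, ⟨a, ha⟩, ⟨e, he⟩), rfl⟩

lemma mem_range_gmap_zero {d : ℕ} (hd0 : d ≠ 0) {j k l : Fin 4} (h : GoodIdx 0 j k l)
    {a e : ℂ} (ha : a ^ d = -1) (he : e ^ d = -1) :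
    fermatLine 0 j k l a e ∈ Set.range (gmap d) := by
  rcases lt_or_gt_of_ne h.2.2.2.2.2.1 with hkl | hkl
  · exact mem_range_gmap_canon h hkl ha he
  · rw [fermatLine_flip2 _ _ _ _ _ (root_ne_zero hd0 he)]
    exact mem_range_gmap_canon h.flip2 hkl ha (inv_root he)

lemma mem_range_gmap {d : ℕ} (hd0 : d ≠ 0) {i j k l : Fin 4} (h : GoodIdx i j k l)
    {a e : ℂ} (ha : a ^ d = -1) (he : e ^ d = -1) :
    fermatLine i j k l a e ∈ Set.range (gmap d) := by
  rcases h.2.2.2.2.2.2 0 with h0 | h0 | h0 | h0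
  · rw [← h0] at h ⊢
    exact mem_range_gmap_zero hd0 h ha he
  · rw [fermatLine_flip1 _ _ _ _ _ (root_ne_zero hd0 ha)]
    have h' := h.flip1
    rw [← h0] at h' ⊢
    exact mem_range_gmap_zero hd0 h' (inv_root ha) he
  · rw [fermatLine_swap]
    have h' := h.swap
    rw [← h0] at h' ⊢
    exact mem_range_gmap_zero hd0 h' he ha
  · rw [fermatLine_swap, fermatLine_flip1 _ _ _ _ _ (root_ne_zero hd0 he)]
    have h' := h.swap.flip1
    rw [← h0] at h' ⊢
    exact mem_range_gmap_zero hd0 h' (inv_root he) ha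

lemma gmap_inj {d : ℕ} (hd0 : d ≠ 0) : Function.Injective (gmap d) := by
  rintro ⟨m, ⟨α, hα⟩, ⟨β, hβ⟩⟩ ⟨m', ⟨α', hα'⟩, ⟨β', hβ'⟩⟩ h
  simp only [Prod.mk.injEq, Subtype.mk.injEq]
  fin_cases m <;> fin_cases m'
  · -- (0,0)
    have h' : fermatLine 0 1 2 3 α β = fermatLine 0 1 2 3 α' β' := h
    have hu : ((Pi.single 0 1 : Fin 4 → ℂ) + α • (Pi.single 1 1 : Fin 4 → ℂ)) ∈ fermatLine 0 1 2 3 α β :=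
      ⟨by simp [Pi.single_apply], by simp [Pi.single_apply]⟩
    have hv : ((Pi.single 2 1 : Fin 4 → ℂ) + β • (Pi.single 3 1 : Fin 4 → ℂ)) ∈ fermatLine 0 1 2 3 α β :=
      ⟨by simp [Pi.single_apply], by simp [Pi.single_apply]⟩
    rw [h'] at hu hv
    obtain ⟨e1, -⟩ := hu
    obtain ⟨-, e2⟩ := hv
    simp [Pi.single_apply] at e1 e2
    exact ⟨rfl, e1, e2⟩
  · -- (0,1)
    have h' : fermatLine 0 1 2 3 α β = fermatLine 0 2 1 3 α' β' := h
    have hu : ((Pi.single 0 1 : Fin 4 → ℂ) + α • (Pi.single 1 1 : Fin 4 → ℂ)) ∈ fermatLine 0 1 2 3 α β :=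
      ⟨by simp [Pi.single_apply], by simp [Pi.single_apply]⟩
    rw [h'] at hu
    obtain ⟨e1, e2⟩ := hu
    simp [Pi.single_apply] at e1 e2
    first
    | exact absurd e1 (Ne.symm (root_ne_zero hd0 hα'))
    | exact absurd e1 (root_ne_zero hd0 hα')
    | exact absurd e2 (Ne.symm (root_ne_zero hd0 hβ'))
    | exact absurd e2 (root_ne_zero hd0 hβ')
    | (exfalso; revert e1 e2; tauto)
  · -- (0,2)
    have h' : fermatLine 0 1 2 3 α β = fermatLine 0 3 1 2 α' β' := h
    have hu : ((Pi.single 0 1 : Fin 4 → ℂ) + α • (Pi.single 1 1 : Fin 4 → ℂ)) ∈ fermatLine 0 1 2 3 α β :=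
      ⟨by simp [Pi.single_apply], by simp [Pi.single_apply]⟩
    rw [h'] at hu
    obtain ⟨e1, e2⟩ := hu
    simp [Pi.single_apply] at e1 e2
    first
    | exact absurd e1 (Ne.symm (root_ne_zero hd0 hα'))
    | exact absurd e1 (root_ne_zero hd0 hα')
    | exact absurd e2 (Ne.symm (root_ne_zero hd0 hβ'))
    | exact absurd e2 (root_ne_zero hd0 hβ')
    | (exfalso; revert e1 e2; tauto)
  · -- (1,0)
    have h' : fermatLine 0 2 1 3 α β = fermatLine 0 1 2 3 α' β' := h
    have hu : ((Pi.single 0 1 : Fin 4 → ℂ) + α • (Pi.single 2 1 : Fin 4 → ℂ)) ∈ fermatLine 0 2 1 3 α β :=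
      ⟨by simp [Pi.single_apply], by simp [Pi.single_apply]⟩
    rw [h'] at hu
    obtain ⟨e1, e2⟩ := hu
    simp [Pi.single_apply] at e1 e2
    first
    | exact absurd e1 (Ne.symm (root_ne_zero hd0 hα'))
    | exact absurd e1 (root_ne_zero hd0 hα')
    | exact absurd e2 (Ne.symm (root_ne_zero hd0 hβ'))
    | exact absurd e2 (root_ne_zero hd0 hβ')
    | (exfalso; revert e1 e2; tauto)
  · -- (1,1)
    have h' : fermatLine 0 2 1 3 α β = fermatLine 0 2 1 3 α' β' := h
    have hu : ((Pi.single 0 1 : Fin 4 → ℂ) + α • (Pi.single 2 1 : Fin 4 → ℂ)) ∈ fermatLine 0 2 1 3 α β :=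
      ⟨by simp [Pi.single_apply], by simp [Pi.single_apply]⟩
    have hv : ((Pi.single 1 1 : Fin 4 → ℂ) + β • (Pi.single 3 1 : Fin 4 → ℂ)) ∈ fermatLine 0 2 1 3 α β :=
      ⟨by simp [Pi.single_apply], by simp [Pi.single_apply]⟩
    rw [h'] at hu hv
    obtain ⟨e1, -⟩ := hu
    obtain ⟨-, e2⟩ := hv
    simp [Pi.single_apply] at e1 e2
    exact ⟨rfl, e1, e2⟩
  · -- (1,2)
    have h' : fermatLine 0 2 1 3 α β = fermatLine 0 3 1 2 α' β' := h
    have hu : ((Pi.single 0 1 : Fin 4 → ℂ) + α • (Pi.single 2 1 : Fin 4 → ℂ)) ∈ fermatLine 0 2 1 3 α β :=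
      ⟨by simp [Pi.single_apply], by simp [Pi.single_apply]⟩
    rw [h'] at hu
    obtain ⟨e1, e2⟩ := hu
    simp [Pi.single_apply] at e1 e2
    first
    | exact absurd e1 (Ne.symm (root_ne_zero hd0 hα'))
    | exact absurd e1 (root_ne_zero hd0 hα')
    | exact absurd e2 (Ne.symm (root_ne_zero hd0 hβ'))
    | exact absurd e2 (root_ne_zero hd0 hβ')
    | (exfalso; revert e1 e2; tauto)
  · -- (2,0)
    have h' : fermatLine 0 3 1 2 α β = fermatLine 0 1 2 3 α' β' := h
    have hu : ((Pi.single 0 1 : Fin 4 → ℂ) + α • (Pi.single 3 1 : Fin 4 → ℂ)) ∈ fermatLine 0 3 1 2 α β :=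
      ⟨by simp [Pi.single_apply], by simp [Pi.single_apply]⟩
    rw [h'] at hu
    obtain ⟨e1, e2⟩ := hu
    simp [Pi.single_apply] at e1 e2
    first
    | exact absurd e1 (Ne.symm (root_ne_zero hd0 hα'))
    | exact absurd e1 (root_ne_zero hd0 hα')
    | exact absurd e2 (Ne.symm (root_ne_zero hd0 hβ'))
    | exact absurd e2 (root_ne_zero hd0 hβ')
    | (exfalso; revert e1 e2; tauto)
  · -- (2,1)
    have h' : fermatLine 0 3 1 2 α β = fermatLine 0 2 1 3 α' β' := h
    have hu : ((Pi.single 0 1 : Fin 4 → ℂ) + α • (Pi.single 3 1 : Fin 4 → ℂ)) ∈ fermatLine 0 3 1 2 α β :=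
      ⟨by simp [Pi.single_apply], by simp [Pi.single_apply]⟩
    rw [h'] at hu
    obtain ⟨e1, e2⟩ := hu
    simp [Pi.single_apply] at e1 e2
    first
    | exact absurd e1 (Ne.symm (root_ne_zero hd0 hα'))
    | exact absurd e1 (root_ne_zero hd0 hα')
    | exact absurd e2 (Ne.symm (root_ne_zero hd0 hβ'))
    | exact absurd e2 (root_ne_zero hd0 hβ')
    | (exfalso; revert e1 e2; tauto)
  · -- (2,2)
    have h' : fermatLine 0 3 1 2 α β = fermatLine 0 3 1 2 α' β' := h
    have hu : ((Pi.single 0 1 : Fin 4 → ℂ) + α • (Pi.single 3 1 : Fin 4 → ℂ)) ∈ fermatLine 0 3 1 2 α β :=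
      ⟨by simp [Pi.single_apply], by simp [Pi.single_apply]⟩
    have hv : ((Pi.single 1 1 : Fin 4 → ℂ) + β • (Pi.single 2 1 : Fin 4 → ℂ)) ∈ fermatLine 0 3 1 2 α β :=
      ⟨by simp [Pi.single_apply], by simp [Pi.single_apply]⟩
    rw [h'] at hu hv
    obtain ⟨e1, -⟩ := hu
    obtain ⟨-, e2⟩ := hv
    simp [Pi.single_apply] at e1 e2
    exact ⟨rfl, e1, e2⟩

lemma exists_minor {u v : Fin 4 → ℂ} (h : LinearIndependent ℂ ![u, v]) :
    ∃ i k : Fin 4, u i * v k - u k * v i ≠ 0 := by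
  by_contra hcon
  push_neg at hcon
  by_cases hu : u = 0
  · have := (LinearIndependent.pair_iff.mp h 1 0 (by simp [hu])).1
    norm_num at this
  · obtain ⟨t, ht⟩ : ∃ t, u t ≠ 0 := by
      by_contra hc
      push_neg at hc
      exact hu (funext hc)
    have hv : v = (v t / u t) • u := by
      funext s
      have := hcon s t
      simp only [Pi.smul_apply, smul_eq_mul]
      field_simp
      linear_combination -this
    have := (LinearIndependent.pair_iff.mp h (v t / u t) (-1)
      (by nth_rewrite 2 [hv]; module)).2
    norm_num at this

lemma exists_good (i k : Fin 4) (hik : i ≠ k) : ∃ j l, GoodIdx i j k l := by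
  revert hik
  revert i k
  decide

lemma quad_good : ∀ m : Fin 3,
    GoodIdx (quadIdx m).1 (quadIdx m).2.1 (quadIdx m).2.2.1 (quadIdx m).2.2.2 := by decide

lemma card_roots {d : ℕ} (hd0 : d ≠ 0) : Nat.card {z : ℂ // z ^ d = -1} = d := by
  have hset : {z : ℂ | z ^ d = -1} = (X ^ d - C (-1) : ℂ[X]).rootSet ℂ := by
    ext z
    rw [Polynomial.mem_rootSet]
    constructor
    · intro hz
      simp only [Set.mem_setOf_eq] at hz
      refine ⟨X_pow_sub_C_ne_zero (by omega) _, ?_⟩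
      rw [map_sub, map_pow, aeval_X, aeval_C, hz]
      norm_num
    · rintro ⟨-, hz⟩
      rw [map_sub, map_pow, aeval_X, aeval_C, sub_eq_zero] at hz
      simpa using hz
  have h1 : Nat.card {z : ℂ // z ^ d = -1} = Nat.card ({z : ℂ | z ^ d = -1} : Set ℂ) := rfl
  rw [h1, hset, Nat.card_eq_fintype_card,
    Polynomial.card_rootSet_eq_natDegree (Polynomial.separable_X_pow_sub_C _
      (by exact_mod_cast (Nat.cast_ne_zero (R := ℂ)).mpr hd0) (by norm_num))
      (IsAlgClosed.splits _),
    Polynomial.natDegree_X_pow_sub_C]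

/-- For every integer `d ≥ 3`, the degree-`d` Fermat surface
`x₀^d + x₁^d + x₂^d + x₃^d = 0` in `ℙ³(ℂ)` contains exactly `3d²` lines: the number of
two-dimensional ℂ-linear subspaces `W ⊆ ℂ⁴` on which the Fermat polynomial vanishes
identically is exactly `3d²`. -/
theorem fermat_surface_lines_count (d : ℕ) (hd : 3 ≤ d) :
    {W : Submodule ℂ (Fin 4 → ℂ) | Module.finrank ℂ W = 2 ∧
      ∀ x ∈ W, ∑ i : Fin 4, x i ^ d = 0}.ncard = 3 * d ^ 2 := by
  classical
  have hd0 : d ≠ 0 := by omega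
  have hSg : {W : Submodule ℂ (Fin 4 → ℂ) | Module.finrank ℂ W = 2 ∧
      ∀ x ∈ W, ∑ i : Fin 4, x i ^ d = 0} = Set.range (gmap d) := by
    ext W
    constructor
    · rintro ⟨hW2, hvan⟩
      -- pick a basis of W
      have : Module.Finite ℂ W := inferInstance
      let b : Basis (Fin 2) ℂ W := finBasisOfFinrankEq ℂ W hW2
      set u₀ : Fin 4 → ℂ := (b 0 : Fin 4 → ℂ) with hu₀
      set v₀ : Fin 4 → ℂ := (b 1 : Fin 4 → ℂ) with hv₀
      have hu₀W : u₀ ∈ W := (b 0).2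
      have hv₀W : v₀ ∈ W := (b 1).2
      have hli : LinearIndependent ℂ ![u₀, v₀] := by
        have h2 := b.linearIndependent.map' W.subtype (Submodule.ker_subtype W)
        have : ![u₀, v₀] = fun n => W.subtype (b n) := by
          funext n
          fin_cases n <;> rfl
        rw [this]
        exact h2
      obtain ⟨i, k, hΔ⟩ := exists_minor hli
      set Δ : ℂ := u₀ i * v₀ k - u₀ k * v₀ i with hΔdef
      have hik : i ≠ k := by
        intro h
        apply hΔ
        rw [hΔdef, h]
        ring
      obtain ⟨j, l, hgood⟩ := exists_good i k hik
      set u : Fin 4 → ℂ := Δ⁻¹ • (v₀ k • u₀ - u₀ k • v₀) with hu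
      set v : Fin 4 → ℂ := Δ⁻¹ • (u₀ i • v₀ - v₀ i • u₀) with hv
      have huW : u ∈ W := W.smul_mem _ (W.sub_mem (W.smul_mem _ hu₀W) (W.smul_mem _ hv₀W))
      have hvW : v ∈ W := W.smul_mem _ (W.sub_mem (W.smul_mem _ hv₀W) (W.smul_mem _ hu₀W))
      have hui : u i = 1 := by
        rw [hu]
        simp only [Pi.smul_apply, Pi.sub_apply, smul_eq_mul]
        field_simp
        ring
      have huk : u k = 0 := by
        rw [hu]
        simp only [Pi.smul_apply, Pi.sub_apply, smul_eq_mul]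
        ring
      have hvi : v i = 0 := by
        rw [hv]
        simp only [Pi.smul_apply, Pi.sub_apply, smul_eq_mul]
        ring
      have hvk : v k = 1 := by
        rw [hv]
        simp only [Pi.smul_apply, Pi.sub_apply, smul_eq_mul]
        field_simp
        ring
      obtain ⟨a, e, ha, he, hcase⟩ :=
        key_structure hd hW2 hvan hgood huW hvW hui huk hvi hvk
      rcases hcase with rfl | rfl
      · exact mem_range_gmap hd0 hgood ha he
      · exact mem_range_gmap hd0 hgood.perm2 ha he
    · rintro ⟨⟨m, α, β⟩, rfl⟩
      constructor
      · exact fermatLine_finrank (quad_good m) _ _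
      · exact fermatLine_vanish hd0 (quad_good m) α.2 β.2
  rw [hSg, ← Set.image_univ, Set.ncard_image_of_injective _ (gmap_inj hd0), Set.ncard_univ,
    Nat.card_prod, Nat.card_prod, Nat.card_eq_fintype_card, Fintype.card_fin,
    card_roots hd0]
  ring
end
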